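/- Let A be an alphabet of k ≥ 2 symbols and φ : ℕ → [0,∞) non-decreasing and unbounded. Suppose there exists c ∈ (1, k) with k − ⌊φ(0)⌋ − Σ_{l=1}^{∞} (⌊φ(l)⌋ − ⌊φ(l−1)⌋)/c^l ≥ c. Then the number of φ-aperiodic words of length m in A satisfies |W^g(m)| ≥ c^m for every m ∈ ℕ, and consequently there exists a one-sided infinite φ-aperiodic word w : ℕ → A. -/

import Mathlib

/-- A finite word `v` of length `m` is good (φ-aperiodic) if whenever a subword of
length `l+1` starting at position `i` reappears at shift `s ≥ 1` (inside the word),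
then `s > φ(l)`. -/
def GoodWord {A : Type*} (φ : ℕ → ℝ) (m : ℕ) (v : Fin m → A) : Prop :=
  ∀ i s l : ℕ, 1 ≤ s → ∀ h : i + s + l < m,
    (∀ j : ℕ, ∀ hj : j ≤ l,
      v ⟨i + j, by omega⟩ = v ⟨i + s + j, by omega⟩) → φ l < s

/-!
Let `G m` count the good words of length `m` and let `L s = firstForbidden φ s` be the least
`l` with `s ≤ φ l`, so that a repeat of length `l + 1` at shift `s` is forbidden exactly when
`l ≥ L s`. Appending a letter to a good word of length `m` yields either a good word or a word
whose last `L s + 1` letters repeat at some shift `s`; such a word is determined by its first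
`m - L s` letters, which form a good word. Hence `k G m ≤ G (m + 1) + ∑ₛ G (m - L s)`.
Inductively `G (m - L) ≤ c⁻ᴸ G m`, and grouping the shifts `s` by the value of `L s` bounds
`∑ₛ c^(-L s)` by `⌊φ 0⌋ + ∑ₗ (⌊φ (l+1)⌋ - ⌊φ l⌋) / c^(l+1) ≤ k - c`, so `c G m ≤ G (m + 1)`.
By compactness of `A^ℕ`, the nested nonempty closed sets of infinite words whose prefix of
length `m` is good have a common point, which is the infinite word.
-/

open Finset

theorem exists_forall_prefix_of_forall_exists {A : Type*} [Finite A]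
    (P : ∀ m, (Fin m → A) → Prop) (hP : ∀ m v, P (m + 1) v → P m (Fin.init v))
    (hne : ∀ m, ∃ v, P m v) : ∃ w : ℕ → A, ∀ m, P m fun i => w i := by
  let _ : TopologicalSpace A := ⊥
  have : DiscreteTopology A := ⟨rfl⟩
  let t : ℕ → Set (ℕ → A) := fun m => {w | P m fun i => w i}
  have htd : ∀ m, t (m + 1) ⊆ t m := fun m _ hw => hP m _ hw
  have htn : ∀ m, (t m).Nonempty := by
    obtain ⟨a, -⟩ := hne 1
    intro m
    obtain ⟨v, hv⟩ := hne m
    refine ⟨fun j => if h : j < m then v ⟨j, h⟩ else a 0, ?_⟩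
    simpa [t] using hv
  have htcl : ∀ m, IsClosed (t m) := fun m =>
    (isClosed_discrete {v : Fin m → A | P m v}).preimage
      (f := fun (w : ℕ → A) (i : Fin m) => w i) (by fun_prop)
  obtain ⟨w, hw⟩ := (htcl 0).isCompact.nonempty_iInter_of_sequence_nonempty_isCompact_isClosed
    t htd htn htcl
  exact ⟨w, Set.mem_iInter.mp hw⟩

namespace GoodWord

variable {A : Type*} {φ : ℕ → ℝ}

theorem castLE {m n : ℕ} (h : n ≤ m) {v : Fin m → A} (hv : GoodWord φ m v) :
    GoodWord φ n fun i => v (Fin.castLE h i) :=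
  fun i s l hs hlt hrep => hv i s l hs (hlt.trans_le h) hrep

theorem init {m : ℕ} {v : Fin (m + 1) → A} (hv : GoodWord φ (m + 1) v) :
    GoodWord φ m (Fin.init v) :=
  hv.castLE m.le_succ

theorem of_fin_zero (v : Fin 0 → A) : GoodWord φ 0 v :=
  fun _ _ _ _ h => absurd h (Nat.not_lt_zero _)

end GoodWord

noncomputable def firstForbidden (φ : ℕ → ℝ) (s : ℕ) : ℕ := sInf {l | (s : ℝ) ≤ φ l}

section firstForbidden

variable {φ : ℕ → ℝ} {s l : ℕ}

theorem cast_le_apply_firstForbidden (hunb : ∀ C : ℝ, ∃ j : ℕ, C < φ j) (s : ℕ) :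
    (s : ℝ) ≤ φ (firstForbidden φ s) :=
  Nat.sInf_mem ((hunb s).imp fun _ => le_of_lt)

theorem firstForbidden_le (h : (s : ℝ) ≤ φ l) : firstForbidden φ s ≤ l := Nat.sInf_le h

theorem apply_lt_of_lt_firstForbidden (h : l < firstForbidden φ s) : φ l < s :=
  not_le.mp fun h' => (firstForbidden_le h').not_gt h

end firstForbidden

def PeriodicFrom {A : Type*} {n : ℕ} (s t : ℕ) (v : Fin n → A) : Prop :=
  ∀ p : Fin n, t ≤ p → v p = v ⟨p - s, (Nat.sub_le _ _).trans_lt p.isLt⟩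

theorem PeriodicFrom.eq_of_forall_lt_eq {A : Type*} {n s t : ℕ} (hs : 0 < s) (hst : s ≤ t)
    {u v : Fin n → A} (hu : PeriodicFrom s t u) (hv : PeriodicFrom s t v)
    (huv : ∀ p : Fin n, p < t → u p = v p) : u = v := by
  funext ⟨p, hp⟩
  induction p using Nat.strong_induction_on with
  | _ p ih =>
    by_cases hpt : p < t
    · exact huv _ hpt
    · rw [hu ⟨p, hp⟩ (Nat.not_lt.mp hpt), hv ⟨p, hp⟩ (Nat.not_lt.mp hpt)]
      exact ih (p - s) (by omega) _

theorem goodWord_or_periodicFrom_of_init {A : Type*} {φ : ℕ → ℝ} {m : ℕ} {v : Fin (m + 1) → A}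
    (hv : GoodWord φ m (Fin.init v)) :
    GoodWord φ (m + 1) v ∨ ∃ s ∈ Icc 1 m, s + firstForbidden φ s ≤ m ∧
      PeriodicFrom s (m - firstForbidden φ s) v := by
  refine or_iff_not_imp_left.mpr fun hbad => ?_
  simp only [GoodWord, not_forall, not_lt] at hbad
  obtain ⟨i, s, l, hs, hlt, hrep, hφ⟩ := hbad
  have hend : i + s + l = m := by
    by_contra hne
    exact (hv i s l hs (by omega) hrep).not_ge hφ
  have hL := firstForbidden_le hφ
  refine ⟨s, mem_Icc.mpr ⟨hs, by omega⟩, by omega, fun p hp => ?_⟩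
  convert (hrep (p - i - s) (by omega)).symm using 2 <;> ext <;> simp <;> omega

section count

open scoped Classical

variable (A : Type*) [Fintype A] (φ : ℕ → ℝ)

noncomputable def goodWords (m : ℕ) : Finset (Fin m → A) := {v | GoodWord φ m v}

theorem natCard_subtype_goodWord (m : ℕ) :
    Nat.card {v : Fin m → A // GoodWord φ m v} = #(goodWords A φ m) := by
  rw [Nat.card_eq_fintype_card, Fintype.card_subtype]
  rfl

theorem card_goodWords_zero : #(goodWords A φ 0) = 1 := by
  rw [goodWords, filter_true_of_mem fun v _ => GoodWord.of_fin_zero v, card_univ]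
  simp

variable {A φ}

theorem mem_goodWords {m : ℕ} {v : Fin m → A} : v ∈ goodWords A φ m ↔ GoodWord φ m v := by
  simp [goodWords]

theorem card_filter_periodicFrom_le {m s t : ℕ} (hs : 0 < s) (hst : s ≤ t) (htm : t ≤ m) :
    #{v : Fin (m + 1) → A | GoodWord φ m (Fin.init v) ∧ PeriodicFrom s t v} ≤
      #(goodWords A φ t) := by
  refine card_le_card_of_injOn (fun v i => v (Fin.castLE (htm.trans m.le_succ) i)) ?_ ?_
  · intro v hv
    exact mem_goodWords.mpr ((mem_filter.mp hv).2.1.castLE htm)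
  · intro u hu v hv huv
    exact (mem_filter.mp hu).2.2.eq_of_forall_lt_eq hs hst (mem_filter.mp hv).2.2
      fun p hp => congrFun huv ⟨p, hp⟩

theorem card_goodWords_mul_card_le (m : ℕ) :
    #(goodWords A φ m) * Fintype.card A ≤ #(goodWords A φ (m + 1)) +
      ∑ s ∈ Icc 1 m with s + firstForbidden φ s ≤ m,
        #(goodWords A φ (m - firstForbidden φ s)) := by
  set S := {s ∈ Icc 1 m | s + firstForbidden φ s ≤ m}
  let bad : ℕ → Finset (Fin (m + 1) → A) := fun s => {v |
    GoodWord φ m (Fin.init v) ∧ PeriodicFrom s (m - firstForbidden φ s) v}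
  have hmaps : Set.MapsTo (fun x : (Fin m → A) × A => (Fin.snoc x.1 x.2 : Fin (m + 1) → A))
      ↑(goodWords A φ m ×ˢ (univ : Finset A))
      (↑(goodWords A φ (m + 1) ∪ S.biUnion bad) : Set (Fin (m + 1) → A)) := by
    rintro ⟨u, a⟩ hu
    replace hu : GoodWord φ m u := mem_goodWords.mp (mem_product.mp hu).1
    have hinit : GoodWord φ m (Fin.init (Fin.snoc u a : Fin (m + 1) → A)) := by
      rwa [Fin.init_snoc]
    rcases goodWord_or_periodicFrom_of_init hinit with hgood | ⟨s, hs, hsm, hper⟩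
    · exact mem_union_left _ (mem_goodWords.mpr hgood)
    · exact mem_union_right _ (mem_biUnion.mpr ⟨s, mem_filter.mpr ⟨hs, hsm⟩,
        mem_filter.mpr ⟨mem_univ _, hinit, hper⟩⟩)
  calc #(goodWords A φ m) * Fintype.card A = #(goodWords A φ m ×ˢ univ) := by
        rw [card_product, card_univ]
    _ ≤ #(goodWords A φ (m + 1) ∪ S.biUnion bad) :=
        card_le_card_of_injOn _ hmaps fun x _ y _ h => Prod.ext_iff.mpr (Fin.snoc_injective2 h)
    _ ≤ #(goodWords A φ (m + 1)) + ∑ s ∈ S, #(bad s) :=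
        (card_union_le _ _).trans (Nat.add_le_add_left card_biUnion_le _)
    _ ≤ _ := by
        gcongr with s hs
        obtain ⟨hs, hsm⟩ := mem_filter.mp hs
        exact card_filter_periodicFrom_le (mem_Icc.mp hs).1 (by omega) (Nat.sub_le _ _)

end count

section weights

variable {φ : ℕ → ℝ}

theorem card_filter_firstForbidden_eq_zero_le (hunb : ∀ C : ℝ, ∃ j : ℕ, C < φ j) (N : ℕ) :
    #{s ∈ Icc 1 N | firstForbidden φ s = 0} ≤ ⌊φ 0⌋₊ := by
  calc #{s ∈ Icc 1 N | firstForbidden φ s = 0} ≤ #(Ioc 0 ⌊φ 0⌋₊) := by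
        refine card_le_card fun s hs => ?_
        obtain ⟨hs, h0⟩ := mem_filter.mp hs
        refine mem_Ioc.mpr ⟨(mem_Icc.mp hs).1, Nat.le_floor ?_⟩
        simpa [h0] using cast_le_apply_firstForbidden hunb s
    _ = ⌊φ 0⌋₊ := by simp

theorem card_filter_firstForbidden_eq_succ_le (hnonneg : ∀ l : ℕ, 0 ≤ φ l)
    (hunb : ∀ C : ℝ, ∃ j : ℕ, C < φ j) (N l : ℕ) :
    #{s ∈ Icc 1 N | firstForbidden φ s = l + 1} ≤ ⌊φ (l + 1)⌋₊ - ⌊φ l⌋₊ := by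
  calc #{s ∈ Icc 1 N | firstForbidden φ s = l + 1} ≤ #(Ioc ⌊φ l⌋₊ ⌊φ (l + 1)⌋₊) := by
        refine card_le_card fun s hs => ?_
        obtain ⟨-, hl⟩ := mem_filter.mp hs
        refine mem_Ioc.mpr ⟨(Nat.floor_lt (hnonneg l)).mpr ?_, Nat.le_floor ?_⟩
        · exact apply_lt_of_lt_firstForbidden (by omega)
        · simpa [hl] using cast_le_apply_firstForbidden hunb s
    _ = ⌊φ (l + 1)⌋₊ - ⌊φ l⌋₊ := Nat.card_Ioc _ _

theorem sum_inv_pow_firstForbidden_le (hmono : Monotone φ) (hnonneg : ∀ l : ℕ, 0 ≤ φ l)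
    (hunb : ∀ C : ℝ, ∃ j : ℕ, C < φ j) {c : ℝ} (hc : 0 < c)
    (hsum : Summable fun l : ℕ => ((⌊φ (l + 1)⌋ : ℝ) - (⌊φ l⌋ : ℝ)) / c ^ (l + 1)) (N : ℕ) :
    ∑ s ∈ Icc 1 N, (c ^ firstForbidden φ s)⁻¹ ≤
      (⌊φ 0⌋ : ℝ) + ∑' l : ℕ, ((⌊φ (l + 1)⌋ : ℝ) - (⌊φ l⌋ : ℝ)) / c ^ (l + 1) := by
  set L := firstForbidden φ
  set M := (Icc 1 N).sup L
  have hfloor : ∀ l, (⌊φ l⌋₊ : ℝ) = ⌊φ l⌋ := fun l => natCast_floor_eq_intCast_floor (hnonneg l)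
  have hterm : ∀ l : ℕ, (#{s ∈ Icc 1 N | L s = l + 1} : ℝ) * (c ^ (l + 1))⁻¹ ≤
      ((⌊φ (l + 1)⌋ : ℝ) - (⌊φ l⌋ : ℝ)) / c ^ (l + 1) := by
    intro l
    rw [div_eq_mul_inv, ← hfloor, ← hfloor,
      ← Nat.cast_sub (Nat.floor_mono (hmono l.le_succ))]
    gcongr
    exact card_filter_firstForbidden_eq_succ_le hnonneg hunb N l
  have hterm_nonneg : ∀ l : ℕ, 0 ≤ ((⌊φ (l + 1)⌋ : ℝ) - (⌊φ l⌋ : ℝ)) / c ^ (l + 1) :=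
    fun l => div_nonneg (sub_nonneg.mpr (Int.cast_le.mpr (Int.floor_mono (hmono l.le_succ))))
      (by positivity)
  calc ∑ s ∈ Icc 1 N, (c ^ L s)⁻¹
      = ∑ l ∈ range (M + 1), (#{s ∈ Icc 1 N | L s = l} : ℝ) * (c ^ l)⁻¹ := by
        rw [← sum_fiberwise_of_maps_to fun s hs => mem_range_succ_iff.mpr (le_sup hs)]
        refine sum_congr rfl fun l _ => ?_
        rw [sum_congr rfl fun s hs => by rw [(mem_filter.mp hs).2], sum_const, nsmul_eq_mul]
    _ = ∑ l ∈ range M, (#{s ∈ Icc 1 N | L s = l + 1} : ℝ) * (c ^ (l + 1))⁻¹ +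
          #{s ∈ Icc 1 N | L s = 0} := by
        simp [sum_range_succ']
    _ ≤ ∑' l : ℕ, ((⌊φ (l + 1)⌋ : ℝ) - (⌊φ l⌋ : ℝ)) / c ^ (l + 1) + ⌊φ 0⌋ := by
        gcongr
        · exact (sum_le_sum fun l _ => hterm l).trans
            (hsum.sum_le_tsum _ fun l _ => hterm_nonneg l)
        · rw [← hfloor]
          exact_mod_cast card_filter_firstForbidden_eq_zero_le hunb N
    _ = _ := add_comm _ _

end weights

theorem pow_mul_le_of_forall_lt_mul_le_succ {g : ℕ → ℝ} {c : ℝ} (hc : 0 ≤ c) {m : ℕ}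
    (h : ∀ n < m, c * g n ≤ g (n + 1)) : ∀ d ≤ m, c ^ d * g (m - d) ≤ g m
  | 0, _ => by simp
  | d + 1, hd => calc
      c ^ (d + 1) * g (m - (d + 1)) = c ^ d * (c * g (m - (d + 1))) := by ring
      _ ≤ c ^ d * g (m - d) := by
        gcongr
        simpa [show m - (d + 1) + 1 = m - d by omega] using h (m - (d + 1)) (by omega)
      _ ≤ g m := pow_mul_le_of_forall_lt_mul_le_succ hc h d (by omega)

section growth

variable {A : Type*} [Fintype A] {φ : ℕ → ℝ} {c : ℝ}

theorem mul_card_goodWords_le_card_goodWords_succ (hmono : Monotone φ)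
    (hnonneg : ∀ l : ℕ, 0 ≤ φ l) (hunb : ∀ C : ℝ, ∃ j : ℕ, C < φ j) (hc : 0 < c)
    (hsum : Summable fun l : ℕ => ((⌊φ (l + 1)⌋ : ℝ) - (⌊φ l⌋ : ℝ)) / c ^ (l + 1))
    (hcond : c ≤ (Fintype.card A : ℝ) - (⌊φ 0⌋ : ℝ) -
      ∑' l : ℕ, ((⌊φ (l + 1)⌋ : ℝ) - (⌊φ l⌋ : ℝ)) / c ^ (l + 1)) (m : ℕ) :
    c * #(goodWords A φ m) ≤ #(goodWords A φ (m + 1)) := by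
  induction m using Nat.strong_induction_on with
  | _ m ih =>
    set L := firstForbidden φ
    set g : ℕ → ℝ := fun n => #(goodWords A φ n)
    set S := {s ∈ Icc 1 m | s + L s ≤ m}
    have hcount : g m * Fintype.card A ≤ g (m + 1) + ∑ s ∈ S, g (m - L s) := by
      have h : _ ≤ (_ : ℝ) := Nat.cast_le.mpr (card_goodWords_mul_card_le (A := A) (φ := φ) m)
      push_cast at h
      exact h
    have hshort : ∑ s ∈ S, g (m - L s) ≤ (∑ s ∈ S, (c ^ L s)⁻¹) * g m := by
      rw [sum_mul]
      refine sum_le_sum fun s hs => ?_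
      rw [inv_mul_eq_div, le_div_iff₀' (by positivity)]
      exact pow_mul_le_of_forall_lt_mul_le_succ hc.le ih _ (by simp [S] at hs; omega)
    have hweights : ∑ s ∈ S, (c ^ L s)⁻¹ ≤ Fintype.card A - c := by
      refine (sum_le_sum_of_subset_of_nonneg (filter_subset _ _) fun _ _ _ => by positivity).trans
        ?_
      linarith [sum_inv_pow_firstForbidden_le hmono hnonneg hunb hc hsum m]
    linarith [mul_le_mul_of_nonneg_right hweights (Nat.cast_nonneg (#(goodWords A φ m)))]

theorem pow_le_card_goodWords (hmono : Monotone φ)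
    (hnonneg : ∀ l : ℕ, 0 ≤ φ l) (hunb : ∀ C : ℝ, ∃ j : ℕ, C < φ j) (hc : 0 < c)
    (hsum : Summable fun l : ℕ => ((⌊φ (l + 1)⌋ : ℝ) - (⌊φ l⌋ : ℝ)) / c ^ (l + 1))
    (hcond : c ≤ (Fintype.card A : ℝ) - (⌊φ 0⌋ : ℝ) -
      ∑' l : ℕ, ((⌊φ (l + 1)⌋ : ℝ) - (⌊φ l⌋ : ℝ)) / c ^ (l + 1)) (m : ℕ) :
    c ^ m ≤ #(goodWords A φ m) := by
  induction m with
  | zero => simp [card_goodWords_zero]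
  | succ m ih => calc
      c ^ (m + 1) = c * c ^ m := pow_succ' c m
      _ ≤ c * #(goodWords A φ m) := by gcongr
      _ ≤ #(goodWords A φ (m + 1)) :=
        mul_card_goodWords_le_card_goodWords_succ hmono hnonneg hunb hc hsum hcond m

end growth

theorem exists_phiaperiodic_word_general {A : Type*} [Fintype A] (k : ℕ) (hk : Fintype.card A = k)
    (φ : ℕ → ℝ) (hmono : Monotone φ) (hnonneg : ∀ l : ℕ, 0 ≤ φ l)
    (hunb : ∀ C : ℝ, ∃ j : ℕ, C < φ j)
    (c : ℝ) (hc1 : 1 < c)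
    (hsum : Summable fun l : ℕ => ((⌊φ (l + 1)⌋ : ℝ) - (⌊φ l⌋ : ℝ)) / c ^ (l + 1))
    (hcond : c ≤ (k : ℝ) - (⌊φ 0⌋ : ℝ) -
      ∑' l : ℕ, ((⌊φ (l + 1)⌋ : ℝ) - (⌊φ l⌋ : ℝ)) / c ^ (l + 1)) :
    (∀ m : ℕ, c ^ m ≤ (Nat.card {v : Fin m → A // GoodWord φ m v} : ℝ)) ∧
    ∃ w : ℕ → A, ∀ i s l : ℕ, 1 ≤ s →
      (∀ j : ℕ, j ≤ l → w (i + j) = w (i + s + j)) → φ l < s := by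
  subst hk
  have hc : 0 < c := zero_lt_one.trans hc1
  have hcount m : c ^ m ≤ #(goodWords A φ m) :=
    pow_le_card_goodWords hmono hnonneg hunb hc hsum hcond m
  refine ⟨fun m => natCard_subtype_goodWord A φ m ▸ hcount m, ?_⟩
  have hne m : ∃ v : Fin m → A, GoodWord φ m v := by
    obtain ⟨v, hv⟩ := card_pos.mp (Nat.cast_pos.mp ((pow_pos hc m).trans_le (hcount m)))
    exact ⟨v, mem_goodWords.mp hv⟩
  obtain ⟨w, hw⟩ :=
    exists_forall_prefix_of_forall_exists (GoodWord φ) (fun _ _ => GoodWord.init) hne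
  exact ⟨w, fun i s l hs hrep => hw (i + s + l + 1) i s l hs (by omega) fun j hj => hrep j hj⟩

/-- If there is `c ∈ (1,k)` with
`k − ⌊φ(0)⌋ − Σ_{l≥1} (⌊φ(l)⌋ − ⌊φ(l−1)⌋)/c^l ≥ c`, then `|W^g(m)| ≥ c^m` for all `m`,
and there exists a one-sided infinite φ-aperiodic word. -/
theorem exists_phiaperiodic_word {A : Type*} [Fintype A] (k : ℕ) (hk : Fintype.card A = k)
    (hk2 : 2 ≤ k) (φ : ℕ → ℝ) (hmono : Monotone φ) (hnonneg : ∀ l : ℕ, 0 ≤ φ l)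
    (hunb : ∀ C : ℝ, ∃ j : ℕ, C < φ j)
    (c : ℝ) (hc1 : 1 < c) (hck : c < k)
    (hsum : Summable fun l : ℕ => ((⌊φ (l + 1)⌋ : ℝ) - (⌊φ l⌋ : ℝ)) / c ^ (l + 1))
    (hcond : c ≤ (k : ℝ) - (⌊φ 0⌋ : ℝ) -
      ∑' l : ℕ, ((⌊φ (l + 1)⌋ : ℝ) - (⌊φ l⌋ : ℝ)) / c ^ (l + 1)) :
    (∀ m : ℕ, c ^ m ≤ (Nat.card {v : Fin m → A // GoodWord φ m v} : ℝ)) ∧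
    ∃ w : ℕ → A, ∀ i s l : ℕ, 1 ≤ s →
      (∀ j : ℕ, j ≤ l → w (i + j) = w (i + s + j)) → φ l < s :=
  exists_phiaperiodic_word_general k hk φ hmono hnonneg hunb c hc1 hsum hcond
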